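/- Let Q ≥ 2 be an integer and let χ, μ ∈ ℝ satisfy 0 ≤ χ < 1 and μ < 2−χ. Then there exist a constant C > 0, a continuous nonnegative function f : ℝ → ℝ with f(t) = t^{1−χ} for all sufficiently large t > 0, and an unbounded, locally Lipschitz weak solution v : ℝ^Q → ℝ of div(∇v/√(1+|∇v|²)) ≥ C (1+|x|)^{−μ} f(v) |∇v|^{χ} / √(1+|∇v|²) on all of ℝ^Q. Consequently, the conclusion that solutions are bounded above fails for the borderline exponent ω = 1−χ in the paper's a-priori estimate for the mean curvature operator. -/

import Mathlib

open Set Filter MeasureTheory Classical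

set_option maxHeartbeats 1600000

noncomputable section

/-- Weak supersolution of the mean curvature inequality
`div(∇v/√(1+|∇v|²)) ≥ Ψ(x)` on `ℝ^Q`, tested against nonnegative Lipschitz
functions with compact support. -/
def IsWeakSuperMC (Q : ℕ) (v : EuclideanSpace ℝ (Fin Q) → ℝ)
    (Ψ : EuclideanSpace ℝ (Fin Q) → ℝ) : Prop :=
  ∀ ϕ : EuclideanSpace ℝ (Fin Q) → ℝ, (∃ K, LipschitzWith K ϕ) → HasCompactSupport ϕ →
    (∀ x, 0 ≤ ϕ x) →
    (∫ x, (inner ℝ (gradient v x) (gradient ϕ x) : ℝ) /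
        Real.sqrt (1 + ‖gradient v x‖ ^ 2))
      ≤ - ∫ x, Ψ x * ϕ x

namespace S17

/-! ### One-dimensional radial profile -/

def cc (m : ℕ) (s : ℝ) : ℝ := 2*m*(1+s)^(m-1) * Real.exp ((1+s)^m)

def cc' (m : ℕ) (s : ℝ) : ℝ :=
  2*m*(((m-1 : ℕ))*(1+s)^(m-1-1)*1) * Real.exp ((1+s)^m)
  + 2*m*(1+s)^(m-1) * (Real.exp ((1+s)^m) * ((m : ℝ)*(1+s)^(m-1)*1))

lemma hasDerivAt_cc (m : ℕ) (s : ℝ) : HasDerivAt (cc m) (cc' m s) s := by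
  have h1 : HasDerivAt (fun s : ℝ => 1 + s) 1 s := by
    simpa using (hasDerivAt_id s).const_add (1:ℝ)
  have h2 : HasDerivAt (fun s : ℝ => (1+s)^(m-1)) (((m-1:ℕ):ℝ)*(1+s)^(m-1-1)*1) s := h1.pow _
  have h3 : HasDerivAt (fun s : ℝ => 2*(m:ℝ)*(1+s)^(m-1))
      (2*(m:ℝ)*(((m-1:ℕ):ℝ)*(1+s)^(m-1-1)*1)) s := h2.const_mul _
  have h4 : HasDerivAt (fun s : ℝ => (1+s)^m) (((m:ℕ):ℝ)*(1+s)^(m-1)*1) s := h1.pow _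
  have h5 : HasDerivAt (fun s : ℝ => Real.exp ((1+s)^m))
      (Real.exp ((1+s)^m) * ((m:ℝ)*(1+s)^(m-1)*1)) s := h4.exp
  exact h3.mul h5

lemma cc_pos (m : ℕ) (hm : 1 ≤ m) {s : ℝ} (hs : 0 ≤ s) : 0 < cc m s := by
  have : (0:ℝ) < 2*m := by positivity
  unfold cc
  positivity

lemma cc'_nonneg (m : ℕ) {s : ℝ} (hs : 0 ≤ s) : 0 ≤ cc' m s := by
  unfold cc'
  have h1 : (0:ℝ) ≤ 1 + s := by linarith
  positivity

def uu (m : ℕ) (s : ℝ) : ℝ := 1 + (cc m s)^2 * s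
def uu' (m : ℕ) (s : ℝ) : ℝ := 2*(cc m s)^(2-1)*(cc' m s) * s + (cc m s)^2 * 1

lemma one_le_uu (m : ℕ) {s : ℝ} (hs : 0 ≤ s) : 1 ≤ uu m s := by
  have : 0 ≤ (cc m s)^2 * s := by positivity
  unfold uu; linarith

lemma uu_pos (m : ℕ) {s : ℝ} (hs : 0 ≤ s) : 0 < uu m s :=
  lt_of_lt_of_le one_pos (one_le_uu m hs)

lemma hasDerivAt_uu (m : ℕ) (s : ℝ) : HasDerivAt (uu m) (uu' m s) s := by
  have h := ((hasDerivAt_cc m s).pow 2).mul (hasDerivAt_id s)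
  unfold uu uu'
  simpa using h.const_add 1

def BB (m : ℕ) (s : ℝ) : ℝ := cc m s / Real.sqrt (uu m s)

def BB' (m : ℕ) (s : ℝ) : ℝ :=
  (cc' m s * Real.sqrt (uu m s) - cc m s * (uu' m s / (2 * Real.sqrt (uu m s))))
    / (Real.sqrt (uu m s))^2

lemma hasDerivAt_BB (m : ℕ) {s : ℝ} (hs : 0 ≤ s) : HasDerivAt (BB m) (BB' m s) s := by
  have hu : (0:ℝ) < uu m s := uu_pos m hs
  have hsq : HasDerivAt (fun s => Real.sqrt (uu m s)) (uu' m s / (2 * Real.sqrt (uu m s))) s :=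
    (hasDerivAt_uu m s).sqrt hu.ne'
  have hden : Real.sqrt (uu m s) ≠ 0 := by positivity
  exact (hasDerivAt_cc m s).div hsq hden

lemma DD_identity (m Q : ℕ) {s : ℝ} (hs : 0 ≤ s) :
    (Q:ℝ) * BB m s + 2*s*BB' m s
      = ((Q:ℝ)*cc m s + ((Q:ℝ)-1)*s*(cc m s)^3 + 2*s*(cc' m s))
        / (uu m s * Real.sqrt (uu m s)) := by
  have hu : (0:ℝ) < uu m s := uu_pos m hs
  have ht : (0:ℝ) < Real.sqrt (uu m s) := Real.sqrt_pos.2 hu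
  have ht2 : (Real.sqrt (uu m s))^2 = uu m s := Real.sq_sqrt hu.le
  unfold BB BB' uu'
  set t := Real.sqrt (uu m s) with htdef
  have hueq : uu m s = t^2 := ht2.symm
  rw [hueq]
  have h1 : uu m s = 1 + (cc m s)^2 * s := rfl
  rw [hueq] at h1
  have key : (Q:ℝ)*(cc m s/t) + 2*s*((cc' m s*t - cc m s*((2*(cc m s)^(2-1)*(cc' m s)*s + (cc m s)^2*1)/(2*t)))/t^2)
      = ((Q:ℝ)*cc m s*t^2 + 2*s*(cc' m s)*t^2 - s*(cc m s)*(2*(cc m s)*(cc' m s)*s + (cc m s)^2))/(t^2*t) := by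
    field_simp
    ring
  rw [key]
  rw [div_eq_div_iff (by positivity) (by positivity)]
  linear_combination (((Q:ℝ)*cc m s + 2*s*cc' m s) * (t^2*t)) * h1

lemma DD_ge (m Q : ℕ) (hm : 1 ≤ m) (hQ : 2 ≤ Q) {s : ℝ} (hs : 0 ≤ s) :
    ((Q:ℝ)-1) * cc m s / Real.sqrt (uu m s) ≤ (Q:ℝ) * BB m s + 2*s*BB' m s := by
  rw [DD_identity m Q hs]
  have hu : (0:ℝ) < uu m s := uu_pos m hs
  have ht : (0:ℝ) < Real.sqrt (uu m s) := Real.sqrt_pos.2 hu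
  have hc : 0 < cc m s := cc_pos m hm hs
  have hc' : 0 ≤ cc' m s := cc'_nonneg m hs
  have hQ2 : (2:ℝ) ≤ (Q:ℝ) := by exact_mod_cast hQ
  rw [div_le_div_iff₀ ht (by positivity)]
  have hN : ((Q:ℝ)-1)*cc m s*(uu m s) ≤ (Q:ℝ)*cc m s + ((Q:ℝ)-1)*s*(cc m s)^3 + 2*s*(cc' m s) := by
    unfold uu
    nlinarith [mul_nonneg hs hc']
  calc ((Q:ℝ)-1) * cc m s * (uu m s * Real.sqrt (uu m s))
      = (((Q:ℝ)-1) * cc m s * uu m s) * Real.sqrt (uu m s) := by ring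
    _ ≤ ((Q:ℝ)*cc m s + ((Q:ℝ)-1)*s*(cc m s)^3 + 2*s*(cc' m s)) * Real.sqrt (uu m s) := by
        exact mul_le_mul_of_nonneg_right hN ht.le

lemma key_ineq (Q m : ℕ) (hQ : 2 ≤ Q) (hm : 1 ≤ m) (χ μ : ℝ) (hχ0 : 0 ≤ χ) (hχ1 : χ < 1)
    (hmbig : |μ| + 1 ≤ 2*((m:ℝ)-1)*(1-χ)) {r : ℝ} (hr : 0 ≤ r) :
    (((Q:ℝ)-1)/2^(m-1)) * (1+r)^(-μ) * (Real.exp ((1+r^2)^m))^(1-χ) * (cc m (r^2) * r)^χ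
      ≤ ((Q:ℝ)-1) * cc m (r^2) := by
  set s := r^2 with hsdef
  have hs : 0 ≤ s := sq_nonneg r
  have h1s : (1:ℝ) ≤ 1 + s := by linarith
  have h1r : (1:ℝ) ≤ 1 + r := by linarith
  set E := Real.exp ((1+s)^m) with hEdef
  have hE : 0 < E := Real.exp_pos _
  set A := 2*(m:ℝ)*(1+s)^(m-1) with hAdef
  have hA1 : (1:ℝ) ≤ A := by
    have h2 : (1:ℝ) ≤ 2*(m:ℝ) := by
      have : (1:ℝ) ≤ (m:ℝ) := by exact_mod_cast hm
      linarith
    have h3 : (1:ℝ) ≤ (1+s)^(m-1) := one_le_pow₀ h1s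
    nlinarith
  have hA0 : 0 ≤ A := by linarith
  have hccA : cc m s = A * E := rfl
  have hQ1 : (0:ℝ) ≤ (Q:ℝ)-1 := by
    have : (2:ℝ) ≤ (Q:ℝ) := by exact_mod_cast hQ
    linarith
  set C0 : ℝ := ((Q:ℝ)-1)/2^(m-1) with hC0def
  have hC0 : 0 ≤ C0 := by positivity
  have e1 : (cc m s * r)^χ = A^χ * E^χ * r^χ := by
    rw [hccA, Real.mul_rpow (by positivity) hr, Real.mul_rpow hA0 hE.le]
  rw [e1, hccA]
  have main : C0 * (1+r)^(-μ) * r^χ ≤ ((Q:ℝ)-1) * A^(1-χ) := by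
    have b1 : (1+r)^(-μ) ≤ (1+r)^(|μ|) :=
      Real.rpow_le_rpow_of_exponent_le h1r (neg_le_abs μ)
    have b2 : r^χ ≤ (1+r)^χ := Real.rpow_le_rpow hr (by linarith) hχ0
    have b3 : (1+r)^χ ≤ (1+r)^(1:ℝ) := Real.rpow_le_rpow_of_exponent_le h1r hχ1.le
    have b4 : C0 * (1+r)^(-μ) * r^χ ≤ C0 * ((1+r)^(|μ|) * (1+r)^(1:ℝ)) := by
      have := mul_le_mul b1 (b2.trans b3) (Real.rpow_nonneg hr χ) (Real.rpow_nonneg (by linarith) _)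
      calc C0 * (1+r)^(-μ) * r^χ = C0 * ((1+r)^(-μ) * r^χ) := by ring
        _ ≤ C0 * ((1+r)^(|μ|) * (1+r)^(1:ℝ)) := by
            exact mul_le_mul_of_nonneg_left this hC0
    have b5 : (1+r)^(|μ|) * (1+r)^(1:ℝ) = (1+r)^(|μ|+1) :=
      (Real.rpow_add (by linarith) _ _).symm
    rw [b5] at b4
    refine b4.trans ?_
    set e : ℝ := ((m:ℝ)-1)*(1-χ) with hedef
    have he0 : 0 ≤ e := by
      have h1 : (1:ℝ) ≤ (m:ℝ) := by exact_mod_cast hm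
      have h2 : 0 ≤ (m:ℝ)-1 := by linarith
      have h3 : 0 ≤ 1-χ := by linarith
      positivity
    have c1 : ((1+s)^(m-1) : ℝ) ≤ A := by
      have h3 : (0:ℝ) ≤ (1+s)^(m-1) := by positivity
      have h2 : (1:ℝ) ≤ 2*(m:ℝ) := by
        have : (1:ℝ) ≤ (m:ℝ) := by exact_mod_cast hm
        linarith
      nlinarith
    have c2 : ((1+s)^(m-1):ℝ)^(1-χ) ≤ A^(1-χ) :=
      Real.rpow_le_rpow (by positivity) c1 (by linarith)
    have c3 : ((1+s)^(m-1):ℝ)^(1-χ) = (1+s)^e := by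
      rw [← Real.rpow_natCast (1+s) (m-1), ← Real.rpow_mul (by linarith)]
      congr 1
      rw [hedef]
      push_cast [Nat.cast_sub hm]
      ring
    have c4 : ((1+r)^2/2 : ℝ) ≤ 1 + s := by rw [hsdef]; nlinarith [sq_nonneg (r-1)]
    have c5 : ((1+r)^2/2 : ℝ)^e ≤ (1+s)^e :=
      Real.rpow_le_rpow (by positivity) c4 he0
    have c6 : ((1+r)^2/2 : ℝ)^e = (1+r)^(2*e) / 2^e := by
      rw [Real.div_rpow (by positivity) (by norm_num)]
      congr 1
      rw [← Real.rpow_natCast (1+r) 2, ← Real.rpow_mul (by linarith)]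
      norm_num
    have c7 : (1+r)^(|μ|+1) ≤ (1+r)^(2*e) := by
      apply Real.rpow_le_rpow_of_exponent_le h1r
      rw [hedef]; linarith [hmbig]
    have c8 : (2:ℝ)^e ≤ 2^(m-1 : ℕ) := by
      rw [← Real.rpow_natCast 2 (m-1)]
      apply Real.rpow_le_rpow_of_exponent_le (by norm_num)
      rw [hedef]
      have h1 : ((m-1:ℕ):ℝ) = (m:ℝ)-1 := by push_cast [Nat.cast_sub hm]; ring
      rw [h1]
      nlinarith [sub_nonneg.2 (show (1:ℝ) ≤ (m:ℝ) from by exact_mod_cast hm)]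
    have c9 : (1+r)^(|μ|+1) / 2^(m-1:ℕ) ≤ (1+r)^(2*e)/2^e := by
      apply div_le_div₀ (Real.rpow_nonneg (by linarith) _) c7 (by positivity) c8
    have c10 : C0 * (1+r)^(|μ|+1) = ((Q:ℝ)-1) * ((1+r)^(|μ|+1) / 2^(m-1:ℕ)) := by
      rw [hC0def]; ring
    rw [c10]
    apply mul_le_mul_of_nonneg_left _ hQ1
    calc (1+r)^(|μ|+1) / 2^(m-1:ℕ) ≤ (1+r)^(2*e)/2^e := c9
      _ = ((1+r)^2/2 : ℝ)^e := c6.symm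
      _ ≤ (1+s)^e := c5
      _ = ((1+s)^(m-1):ℝ)^(1-χ) := c3.symm
      _ ≤ A^(1-χ) := c2
  have eE : E^(1-χ) * E^χ = E := by
    rw [← Real.rpow_add hE]; norm_num
  have eA : A^(1-χ) * A^χ = A := by
    rw [← Real.rpow_add (by linarith : (0:ℝ) < A)]; norm_num
  calc C0 * (1+r)^(-μ) * E^(1-χ) * (A^χ * E^χ * r^χ)
      = (C0 * (1+r)^(-μ) * r^χ) * (E^(1-χ)*E^χ) * A^χ := by ring
    _ = (C0 * (1+r)^(-μ) * r^χ) * E * A^χ := by rw [eE]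
    _ ≤ (((Q:ℝ)-1) * A^(1-χ)) * E * A^χ := by
        apply mul_le_mul_of_nonneg_right _ (Real.rpow_nonneg hA0 χ)
        exact mul_le_mul_of_nonneg_right main hE.le
    _ = ((Q:ℝ)-1) * (A^(1-χ)*A^χ) * E := by ring
    _ = ((Q:ℝ)-1) * (A*E) := by rw [eA]; ring

/-! ### Continuity facts for the profile -/

lemma continuous_cc (m : ℕ) : Continuous (cc m) := by
  unfold cc
  exact (continuous_const.mul ((continuous_const.add continuous_id).pow _)).mul
    (Real.continuous_exp.comp ((continuous_const.add continuous_id).pow _))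

lemma continuous_cc' (m : ℕ) : Continuous (cc' m) := by
  unfold cc'
  fun_prop

lemma continuous_uu (m : ℕ) : Continuous (uu m) := by
  unfold uu
  exact continuous_const.add (((continuous_cc m).pow 2).mul continuous_id)

lemma continuous_uu' (m : ℕ) : Continuous (uu' m) := by
  unfold uu'
  exact ((continuous_const.mul ((continuous_cc m).pow _)).mul (continuous_cc' m)).mul
    continuous_id |>.add (((continuous_cc m).pow 2).mul continuous_const)

lemma continuousAt_BB (m : ℕ) {s : ℝ} (hs : 0 ≤ s) : ContinuousAt (BB m) s := by
  have ht : Real.sqrt (uu m s) ≠ 0 := by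
    have := uu_pos m hs; positivity
  exact (continuous_cc m).continuousAt.div
    (Real.continuous_sqrt.comp (continuous_uu m)).continuousAt ht

lemma continuousAt_BB' (m : ℕ) {s : ℝ} (hs : 0 ≤ s) : ContinuousAt (BB' m) s := by
  have hu := uu_pos m hs
  have ht : Real.sqrt (uu m s) ≠ 0 := by positivity
  have h2t : 2 * Real.sqrt (uu m s) ≠ 0 := by positivity
  have hsq : Continuous (fun t => Real.sqrt (uu m t)) :=
    Real.continuous_sqrt.comp (continuous_uu m)
  apply ContinuousAt.div
  · apply ContinuousAt.sub
    · exact (continuous_cc' m).continuousAt.mul hsq.continuousAt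
    · exact (continuous_cc m).continuousAt.mul
        ((continuous_uu' m).continuousAt.div
          ((continuous_const.mul hsq).continuousAt) h2t)
  · exact (hsq.pow 2).continuousAt
  · have : (0:ℝ) < (Real.sqrt (uu m s))^2 := by
      have := Real.sqrt_pos.2 hu; positivity
    exact this.ne'

/-! ### Euclidean-space level -/

variable {Q : ℕ}

def vv (m : ℕ) (x : EuclideanSpace ℝ (Fin Q)) : ℝ := Real.exp ((1+‖x‖^2)^m)

lemma contDiff_vv (m : ℕ) : ContDiff ℝ (⊤ : ℕ∞) (vv m (Q := Q)) :=
  Real.contDiff_exp.comp ((contDiff_const.add (contDiff_norm_sq ℝ)).pow m)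

lemma hasGradientAt_vv (m : ℕ) (x : EuclideanSpace ℝ (Fin Q)) :
    HasGradientAt (vv m) (cc m (‖x‖^2) • x) x := by
  set s := ‖x‖^2 with hs
  have hsq : HasFDerivAt (fun y : EuclideanSpace ℝ (Fin Q) => ‖y‖^2) (2 • (innerSL ℝ x)) x :=
    (hasStrictFDerivAt_norm_sq x).hasFDerivAt
  have h1 : HasDerivAt (fun t : ℝ => 1 + t) 1 s := by
    simpa using (hasDerivAt_id s).const_add (1:ℝ)
  have h4 : HasDerivAt (fun t : ℝ => (1+t)^m) (((m:ℕ):ℝ)*(1+s)^(m-1)*1) s := h1.pow _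
  have h5 : HasDerivAt (fun t : ℝ => Real.exp ((1+t)^m))
      (Real.exp ((1+s)^m) * ((m:ℝ)*(1+s)^(m-1)*1)) s := h4.exp
  have h6 : HasFDerivAt (vv m (Q := Q))
      ((Real.exp ((1+s)^m) * ((m:ℝ)*(1+s)^(m-1)*1)) • (2 • (innerSL ℝ x))) x :=
    by have := h5.comp_hasFDerivAt x hsq; exact this
  rw [hasGradientAt_iff_hasFDerivAt]
  refine h6.congr_fderiv ?_
  ext y
  simp only [InnerProductSpace.toDual_apply_apply, real_inner_smul_left,
    ContinuousLinearMap.smul_apply, ContinuousLinearMap.coe_smul', Pi.smul_apply, innerSL_apply_apply,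
    smul_eq_mul]
  unfold cc
  ring

lemma gradient_vv (m : ℕ) (x : EuclideanSpace ℝ (Fin Q)) :
    gradient (vv m) x = cc m (‖x‖^2) • x :=
  (hasGradientAt_vv m x).gradient

def FF (m : ℕ) (i : Fin Q) (x : EuclideanSpace ℝ (Fin Q)) : ℝ := BB m (‖x‖^2) * x i

lemma contDiffAt_BB (m : ℕ) {s : ℝ} (hs : 0 ≤ s) : ContDiffAt ℝ 1 (BB m) s := by
  have hcc : ContDiff ℝ 1 (cc m) := by
    unfold cc
    exact (contDiff_const.mul ((contDiff_const.add contDiff_id).pow _)).mul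
      (Real.contDiff_exp.comp ((contDiff_const.add contDiff_id).pow _))
  have huu : ContDiff ℝ 1 (uu m) := by
    unfold uu
    exact contDiff_const.add ((hcc.pow 2).mul contDiff_id)
  have hu : (0:ℝ) < uu m s := uu_pos m hs
  have hsqrt : ContDiffAt ℝ 1 (fun t => Real.sqrt (uu m t)) s :=
    (Real.contDiffAt_sqrt hu.ne').comp s huu.contDiffAt
  exact hcc.contDiffAt.div hsqrt (by positivity)

lemma contDiffAt_FF (m : ℕ) (i : Fin Q) (x : EuclideanSpace ℝ (Fin Q)) :
    ContDiffAt ℝ 1 (FF m i) x := by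
  have h1 : ContDiffAt ℝ 1 (fun y : EuclideanSpace ℝ (Fin Q) => BB m (‖y‖^2)) x :=
    (contDiffAt_BB m (sq_nonneg ‖x‖)).comp x (contDiff_norm_sq ℝ).contDiffAt
  have h2 : ContDiffAt ℝ 1 (fun y : EuclideanSpace ℝ (Fin Q) => y i) x :=
    (EuclideanSpace.proj i : EuclideanSpace ℝ (Fin Q) →L[ℝ] ℝ).contDiff.contDiffAt
  exact h1.mul h2

lemma continuous_FF (m : ℕ) (i : Fin Q) : Continuous (FF m i (Q := Q)) :=
  continuous_iff_continuousAt.2 fun x => (contDiffAt_FF m i x).continuousAt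

lemma hasFDerivAt_FF (m : ℕ) (i : Fin Q) (x : EuclideanSpace ℝ (Fin Q)) :
    HasFDerivAt (FF m i)
      ((x i * BB' m (‖x‖^2)) • (2 • (innerSL ℝ x)) + BB m (‖x‖^2) • (EuclideanSpace.proj i)) x := by
  have hsq : HasFDerivAt (fun y : EuclideanSpace ℝ (Fin Q) => ‖y‖^2) (2 • (innerSL ℝ x)) x :=
    (hasStrictFDerivAt_norm_sq x).hasFDerivAt
  have h1 : HasFDerivAt (fun y : EuclideanSpace ℝ (Fin Q) => BB m (‖y‖^2))
      ((BB' m (‖x‖^2)) • (2 • (innerSL ℝ x))) x :=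
    by have := (hasDerivAt_BB m (sq_nonneg ‖x‖)).comp_hasFDerivAt x hsq; exact this
  have h2 : HasFDerivAt (fun y : EuclideanSpace ℝ (Fin Q) => y i)
      (EuclideanSpace.proj i : EuclideanSpace ℝ (Fin Q) →L[ℝ] ℝ) x :=
    (EuclideanSpace.proj i : EuclideanSpace ℝ (Fin Q) →L[ℝ] ℝ).hasFDerivAt
  have := h1.mul' h2
  refine this.congr_fderiv ?_
  ext y
  simp only [ContinuousLinearMap.add_apply, ContinuousLinearMap.smul_apply,
    ContinuousLinearMap.smulRight_apply, ContinuousLinearMap.coe_smul', Pi.smul_apply,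
    smul_eq_mul, op_smul_eq_mul]
  ring

lemma lineDeriv_FF (m : ℕ) (i : Fin Q) (x : EuclideanSpace ℝ (Fin Q)) :
    lineDeriv ℝ (FF m i) x (EuclideanSpace.single i 1)
      = 2 * BB' m (‖x‖^2) * (x i)^2 + BB m (‖x‖^2) := by
  have h := (hasFDerivAt_FF m i x).hasLineDerivAt (EuclideanSpace.single i (1:ℝ))
  rw [h.lineDeriv]
  simp only [ContinuousLinearMap.add_apply, ContinuousLinearMap.smul_apply,
    ContinuousLinearMap.coe_smul', Pi.smul_apply, smul_eq_mul]
  rw [show ((innerSL ℝ) x) (EuclideanSpace.single i (1:ℝ)) = inner ℝ x (EuclideanSpace.single i (1:ℝ)) from rfl,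
    EuclideanSpace.inner_single_right]
  have hp : (EuclideanSpace.proj i : EuclideanSpace ℝ (Fin Q) →L[ℝ] ℝ) (EuclideanSpace.single i 1) = 1 := by
    show (EuclideanSpace.single i (1:ℝ) : EuclideanSpace ℝ (Fin Q)) i = 1
    simp [EuclideanSpace.single_apply]
  rw [hp]
  simp only [smul_eq_mul, conj_trivial]
  ring

lemma lineDeriv_FF_neg (m : ℕ) (i : Fin Q) (x : EuclideanSpace ℝ (Fin Q)) :
    lineDeriv ℝ (FF m i) x (-(EuclideanSpace.single i 1))
      = -(lineDeriv ℝ (FF m i) x (EuclideanSpace.single i 1)) := by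
  have h1 := (hasFDerivAt_FF m i x).hasLineDerivAt (-(EuclideanSpace.single i (1:ℝ)))
  have h2 := (hasFDerivAt_FF m i x).hasLineDerivAt (EuclideanSpace.single i (1:ℝ))
  rw [h1.lineDeriv, h2.lineDeriv, map_neg]

lemma sum_lineDeriv_FF (m : ℕ) (x : EuclideanSpace ℝ (Fin Q)) :
    ∑ i, lineDeriv ℝ (FF m i) x (EuclideanSpace.single i 1)
      = (Q:ℝ) * BB m (‖x‖^2) + 2*‖x‖^2*BB' m (‖x‖^2) := by
  simp only [lineDeriv_FF]
  rw [Finset.sum_add_distrib]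
  simp only [Finset.sum_const, Finset.card_univ, Fintype.card_fin, nsmul_eq_mul]
  have hx2 : ∑ i, (x i)^2 = ‖x‖^2 := by
    rw [EuclideanSpace.norm_sq_eq]; simp [Real.norm_eq_abs, sq_abs]
  have h3 : ∑ i : Fin Q, 2 * BB' m (‖x‖ ^ 2) * x i ^ 2 = 2 * BB' m (‖x‖^2) * ‖x‖^2 := by
    rw [← Finset.mul_sum, hx2]
  rw [h3]
  ring

def DDfun (Q m : ℕ) (x : EuclideanSpace ℝ (Fin Q)) : ℝ :=
  (Q:ℝ) * BB m (‖x‖^2) + 2*‖x‖^2*BB' m (‖x‖^2)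

lemma continuous_DDfun (Q m : ℕ) : Continuous (DDfun Q m) := by
  have hn : Continuous (fun x : EuclideanSpace ℝ (Fin Q) => ‖x‖^2) :=
    (contDiff_norm_sq ℝ (n := 1)).continuous
  have hBB : Continuous (fun x : EuclideanSpace ℝ (Fin Q) => BB m (‖x‖^2)) := by
    rw [continuous_iff_continuousAt]
    intro x
    have h : ContinuousAt (BB m ∘ fun y : EuclideanSpace ℝ (Fin Q) => ‖y‖^2) x :=
      ContinuousAt.comp (continuousAt_BB m (sq_nonneg ‖x‖)) hn.continuousAt
    exact h
  have hBB' : Continuous (fun x : EuclideanSpace ℝ (Fin Q) => BB' m (‖x‖^2)) := by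
    rw [continuous_iff_continuousAt]
    intro x
    have h : ContinuousAt (BB' m ∘ fun y : EuclideanSpace ℝ (Fin Q) => ‖y‖^2) x :=
      ContinuousAt.comp (continuousAt_BB' m (sq_nonneg ‖x‖)) hn.continuousAt
    exact h
  exact (continuous_const.mul hBB).add ((continuous_const.mul hn).mul hBB')

lemma norm_gradient_vv (m : ℕ) (hm : 1 ≤ m) (x : EuclideanSpace ℝ (Fin Q)) :
    ‖gradient (vv m) x‖ = cc m (‖x‖^2) * ‖x‖ := by
  rw [gradient_vv, norm_smul, Real.norm_eq_abs,
    abs_of_pos (cc_pos m hm (sq_nonneg ‖x‖))]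

lemma sqrt_one_add_grad (m : ℕ) (hm : 1 ≤ m) (x : EuclideanSpace ℝ (Fin Q)) :
    Real.sqrt (1 + ‖gradient (vv m) x‖^2) = Real.sqrt (uu m (‖x‖^2)) := by
  rw [norm_gradient_vv m hm]
  congr 1
  unfold uu
  ring

/-- pointwise comparison: the candidate right-hand side is dominated by the divergence. -/
lemma pointwise_bound (Q m : ℕ) (hQ : 2 ≤ Q) (hm : 1 ≤ m) (χ μ : ℝ)
    (hχ0 : 0 ≤ χ) (hχ1 : χ < 1) (hmbig : |μ| + 1 ≤ 2*((m:ℝ)-1)*(1-χ))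
    (x : EuclideanSpace ℝ (Fin Q)) :
    (((Q:ℝ)-1)/2^(m-1)) * (1+‖x‖)^(-μ) * |vv m x|^(1-χ) * ‖gradient (vv m) x‖^χ
        / Real.sqrt (1 + ‖gradient (vv m) x‖^2)
      ≤ DDfun Q m x := by
  have hs : (0:ℝ) ≤ ‖x‖^2 := sq_nonneg _
  have habs : |vv m x| = Real.exp ((1+‖x‖^2)^m) := abs_of_pos (Real.exp_pos _)
  rw [sqrt_one_add_grad m hm, norm_gradient_vv m hm, habs]
  have h1 : (((Q:ℝ)-1)/2^(m-1)) * (1+‖x‖)^(-μ) * (Real.exp ((1+‖x‖^2)^m))^(1-χ)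
      * (cc m (‖x‖^2) * ‖x‖)^χ ≤ ((Q:ℝ)-1) * cc m (‖x‖^2) :=
    key_ineq Q m hQ hm χ μ hχ0 hχ1 hmbig (norm_nonneg x)
  have ht : (0:ℝ) < Real.sqrt (uu m (‖x‖^2)) := Real.sqrt_pos.2 (uu_pos m hs)
  calc (((Q:ℝ)-1)/2^(m-1)) * (1+‖x‖)^(-μ) * (Real.exp ((1+‖x‖^2)^m))^(1-χ)
        * (cc m (‖x‖^2) * ‖x‖)^χ / Real.sqrt (uu m (‖x‖^2))
      ≤ ((Q:ℝ)-1) * cc m (‖x‖^2) / Real.sqrt (uu m (‖x‖^2)) := by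
        exact div_le_div_of_nonneg_right h1 ht.le |>.trans_eq rfl
    _ ≤ DDfun Q m x := DD_ge m Q hm hQ hs

lemma psi_nonneg (Q m : ℕ) (hQ : 2 ≤ Q) (χ μ : ℝ) (x : EuclideanSpace ℝ (Fin Q)) :
    0 ≤ (((Q:ℝ)-1)/2^(m-1)) * (1+‖x‖)^(-μ) * |vv m x|^(1-χ) * ‖gradient (vv m) x‖^χ
        / Real.sqrt (1 + ‖gradient (vv m) x‖^2) := by
  have hQ1 : (0:ℝ) ≤ (Q:ℝ)-1 := by
    have : (2:ℝ) ≤ (Q:ℝ) := by exact_mod_cast hQ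
    linarith
  have h1 : (0:ℝ) ≤ (1+‖x‖)^(-μ) := Real.rpow_nonneg (by positivity) _
  have h2 : (0:ℝ) ≤ |vv m x|^(1-χ) := Real.rpow_nonneg (abs_nonneg _) _
  have h3 : (0:ℝ) ≤ ‖gradient (vv m) x‖^χ := Real.rpow_nonneg (norm_nonneg _) _
  have h4 : (0:ℝ) ≤ Real.sqrt (1 + ‖gradient (vv m) x‖^2) := Real.sqrt_nonneg _
  positivity

lemma BB_def (m : ℕ) (s : ℝ) : BB m s = cc m s / Real.sqrt (uu m s) := rfl

lemma weak_solution (Q m : ℕ) (hQ : 2 ≤ Q) (hm : 1 ≤ m) (χ μ : ℝ)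
    (hχ0 : 0 ≤ χ) (hχ1 : χ < 1) (hmbig : |μ| + 1 ≤ 2*((m:ℝ)-1)*(1-χ)) :
    ∀ ϕ : EuclideanSpace ℝ (Fin Q) → ℝ, (∃ K, LipschitzWith K ϕ) → HasCompactSupport ϕ →
    (∀ x, 0 ≤ ϕ x) →
    (∫ x, (inner ℝ (gradient (vv m) x) (gradient ϕ x) : ℝ) /
        Real.sqrt (1 + ‖gradient (vv m) x‖ ^ 2))
      ≤ - ∫ x, ((((Q:ℝ)-1)/2^(m-1)) * (1+‖x‖)^(-μ) * |vv m x|^(1-χ)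
          * ‖gradient (vv m) x‖^χ /
          Real.sqrt (1 + ‖gradient (vv m) x‖^2)) * ϕ x := by
  intro ϕ hlip hcs hpos
  obtain ⟨K, hK⟩ := hlip
  set e : Fin Q → EuclideanSpace ℝ (Fin Q) := fun i => EuclideanSpace.single i 1 with he
  -- lineDeriv of ϕ vanishes off the support
  have hLZ : ∀ (w : EuclideanSpace ℝ (Fin Q)) x, x ∉ tsupport ϕ → lineDeriv ℝ ϕ x w = 0 := by
    intro w x hx
    have h0 : ϕ =ᶠ[nhds x] 0 := notMem_tsupport_iff_eventuallyEq.1 hx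
    rw [h0.lineDeriv_eq]
    have h1 := ((hasFDerivAt_const (𝕜 := ℝ) (0:ℝ) x).hasLineDerivAt w).lineDeriv
    exact h1
  -- integration by parts for each coordinate
  have hIBP : ∀ i : Fin Q,
      ∫ x, FF m i x * lineDeriv ℝ ϕ x (e i)
        = - ∫ x, (lineDeriv ℝ (FF m i) x (e i)) * ϕ x := by
    intro i
    obtain ⟨R, hR0, hRsub⟩ := hcs.isBounded.subset_closedBall_lt 0 0
    set bump : ContDiffBump (0 : EuclideanSpace ℝ (Fin Q)) :=
      ⟨R+1, R+2, by linarith, by linarith⟩ with hbump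
    set g : EuclideanSpace ℝ (Fin Q) → ℝ := fun x => bump x * FF m i x with hg
    have hgsupp : HasCompactSupport g := bump.hasCompactSupport.mul_right
    have hgsmooth : ContDiff ℝ 1 g := contDiff_iff_contDiffAt.2 fun x =>
      (bump.contDiff (n := 1)).contDiffAt.mul (contDiffAt_FF m i x)
    obtain ⟨D, hD⟩ := ContDiff.lipschitzWith_of_hasCompactSupport hgsupp hgsmooth one_ne_zero
    have key := LipschitzWith.integral_lineDeriv_mul_eq (μ := volume) hK hD hgsupp (e i)
    have h1 : ∀ x, lineDeriv ℝ ϕ x (e i) * g x = FF m i x * lineDeriv ℝ ϕ x (e i) := by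
      intro x
      by_cases hx : x ∈ tsupport ϕ
      · have hxball : x ∈ Metric.closedBall (0:EuclideanSpace ℝ (Fin Q)) (R+1) := by
          have h2 := hRsub hx
          simp only [Metric.mem_closedBall] at h2 ⊢
          linarith
        have hb1 : bump x = 1 := bump.one_of_mem_closedBall hxball
        rw [hg]; simp only [hb1, one_mul]; ring
      · rw [hLZ _ _ hx]; ring
    have h2 : ∀ x, lineDeriv ℝ g x (-(e i)) * ϕ x
        = -(lineDeriv ℝ (FF m i) x (e i)) * ϕ x := by
      intro x
      by_cases hϕx : ϕ x = 0
      · rw [hϕx]; ring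
      · have hx : x ∈ tsupport ϕ := subset_tsupport ϕ (Function.mem_support.2 hϕx)
        have hxball : x ∈ Metric.ball (0:EuclideanSpace ℝ (Fin Q)) (R+1) := by
          have h3 := hRsub hx
          simp only [Metric.mem_closedBall] at h3
          simp only [Metric.mem_ball]
          linarith
        have hev : g =ᶠ[nhds x] FF m i := by
          filter_upwards [Metric.isOpen_ball.mem_nhds hxball] with y hy
          have hb1 : bump y = 1 := bump.one_of_mem_closedBall (Metric.ball_subset_closedBall hy)
          rw [hg]; simp only [hb1, one_mul]
        rw [hev.lineDeriv_eq, lineDeriv_FF_neg]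
    calc ∫ x, FF m i x * lineDeriv ℝ ϕ x (e i)
        = ∫ x, lineDeriv ℝ ϕ x (e i) * g x :=
          integral_congr_ae (Eventually.of_forall fun x => (h1 x).symm)
      _ = ∫ x, lineDeriv ℝ g x (-(e i)) * ϕ x := key
      _ = ∫ x, -(lineDeriv ℝ (FF m i) x (e i)) * ϕ x :=
          integral_congr_ae (Eventually.of_forall h2)
      _ = - ∫ x, (lineDeriv ℝ (FF m i) x (e i)) * ϕ x := by
          simp_rw [neg_mul]
          exact integral_neg _
  -- a.e. rewriting of the integrand
  have hae : ∀ᵐ x : EuclideanSpace ℝ (Fin Q), DifferentiableAt ℝ ϕ x := hK.ae_differentiableAt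
  have hgradline : ∀ x : EuclideanSpace ℝ (Fin Q), DifferentiableAt ℝ ϕ x →
      (inner ℝ (gradient (vv m) x) (gradient ϕ x) : ℝ)
          / Real.sqrt (1 + ‖gradient (vv m) x‖^2)
        = ∑ i, FF m i x * lineDeriv ℝ ϕ x (e i) := by
    intro x hx
    have hfd : fderiv ℝ ϕ x = InnerProductSpace.toDual ℝ _ (gradient ϕ x) :=
      hx.hasGradientAt.hasFDerivAt.fderiv
    have hcomp : ∀ i, lineDeriv ℝ ϕ x (e i) = gradient ϕ x i := by
      intro i
      rw [hx.lineDeriv_eq_fderiv, hfd, InnerProductSpace.toDual_apply_apply, he]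
      rw [EuclideanSpace.inner_single_right]
      simp
    rw [sqrt_one_add_grad m hm, gradient_vv, real_inner_smul_left]
    have hinner : (inner ℝ x (gradient ϕ x) : ℝ) = ∑ i, x i * gradient ϕ x i := by
      rw [PiLp.inner_apply]; simp [RCLike.inner_apply, conj_trivial, mul_comm]
    rw [hinner, Finset.mul_sum]
    rw [Finset.sum_div]
    refine Finset.sum_congr rfl fun i _ => ?_
    rw [hcomp i]
    unfold FF
    rw [BB_def]
    ring
  -- integrability of summands
  have hintgr : ∀ i : Fin Q,
      Integrable (fun x => FF m i x * lineDeriv ℝ ϕ x (e i)) := by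
    intro i
    obtain ⟨Mb, hMb⟩ := hcs.exists_bound_of_continuousOn ((continuous_FF m i).continuousOn)
    have hKl : ∀ x : EuclideanSpace ℝ (Fin Q), ‖lineDeriv ℝ ϕ x (e i)‖ ≤ K * ‖e i‖ :=
      fun x => norm_lineDeriv_le_of_lipschitz ℝ hK
    refine Integrable.mono'
      (g := fun x => (tsupport ϕ).indicator (fun _ => Mb * (K * ‖e i‖)) x) ?_ ?_ ?_
    · rw [integrable_indicator_iff (isClosed_tsupport ϕ).measurableSet]
      exact integrableOn_const hcs.measure_lt_top.ne
    · exact ((continuous_FF m i).aestronglyMeasurable).mul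
        (aestronglyMeasurable_lineDeriv hK.continuous volume)
    · refine Eventually.of_forall fun x => ?_
      by_cases hx : x ∈ tsupport ϕ
      · simp only [Set.indicator_of_mem hx]
        rw [norm_mul]
        have hb1 : ‖FF m i x‖ ≤ Mb := hMb x hx
        have hb2 : ‖lineDeriv ℝ ϕ x (e i)‖ ≤ K * ‖e i‖ := hKl x
        have hMb0 : 0 ≤ Mb := le_trans (norm_nonneg _) hb1
        exact mul_le_mul hb1 hb2 (norm_nonneg _) hMb0
      · simp only [Set.indicator_of_notMem hx]
        rw [hLZ _ _ hx]
        simp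
  have hint2 : ∀ i : Fin Q,
      Integrable (fun x => lineDeriv ℝ (FF m i) x (e i) * ϕ x) := by
    intro i
    have hcont : Continuous (fun x : EuclideanSpace ℝ (Fin Q) =>
        lineDeriv ℝ (FF m i) x (e i)) := by
      have hfun : (fun x : EuclideanSpace ℝ (Fin Q) => lineDeriv ℝ (FF m i) x (e i))
          = fun x => 2 * BB' m (‖x‖^2) * (x i)^2 + BB m (‖x‖^2) := by
        funext x
        rw [he]
        exact lineDeriv_FF m i x
      rw [hfun]
      have hn : Continuous (fun x : EuclideanSpace ℝ (Fin Q) => ‖x‖^2) :=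
        (contDiff_norm_sq ℝ (n := 1) (E := EuclideanSpace ℝ (Fin Q))).continuous
      have hBB : Continuous (fun x : EuclideanSpace ℝ (Fin Q) => BB m (‖x‖^2)) := by
        rw [continuous_iff_continuousAt]
        intro x
        have h : ContinuousAt (BB m ∘ fun y : EuclideanSpace ℝ (Fin Q) => ‖y‖^2) x :=
          ContinuousAt.comp (continuousAt_BB m (sq_nonneg ‖x‖)) hn.continuousAt
        exact h
      have hBB' : Continuous (fun x : EuclideanSpace ℝ (Fin Q) => BB' m (‖x‖^2)) := by
        rw [continuous_iff_continuousAt]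
        intro x
        have h : ContinuousAt (BB' m ∘ fun y : EuclideanSpace ℝ (Fin Q) => ‖y‖^2) x :=
          ContinuousAt.comp (continuousAt_BB' m (sq_nonneg ‖x‖)) hn.continuousAt
        exact h
      have hproj : Continuous (fun x : EuclideanSpace ℝ (Fin Q) => x i) :=
        (EuclideanSpace.proj i : EuclideanSpace ℝ (Fin Q) →L[ℝ] ℝ).continuous
      exact ((continuous_const.mul hBB').mul (hproj.pow 2)).add hBB
    exact (hcont.mul hK.continuous).integrable_of_hasCompactSupport hcs.mul_left
  -- main chain
  calc (∫ x, (inner ℝ (gradient (vv m) x) (gradient ϕ x) : ℝ) /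
        Real.sqrt (1 + ‖gradient (vv m) x‖ ^ 2))
      = ∫ x, ∑ i, FF m i x * lineDeriv ℝ ϕ x (e i) := by
        refine integral_congr_ae ?_
        filter_upwards [hae] with x hx using hgradline x hx
    _ = ∑ i, ∫ x, FF m i x * lineDeriv ℝ ϕ x (e i) :=
        integral_finset_sum _ (fun i _ => hintgr i)
    _ = ∑ i, (- ∫ x, (lineDeriv ℝ (FF m i) x (e i)) * ϕ x) :=
        Finset.sum_congr rfl fun i _ => hIBP i
    _ = - ∑ i, ∫ x, (lineDeriv ℝ (FF m i) x (e i)) * ϕ x := by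
        rw [← Finset.sum_neg_distrib]
    _ = - ∫ x, ∑ i, (lineDeriv ℝ (FF m i) x (e i)) * ϕ x := by
        rw [integral_finset_sum _ (fun i _ => hint2 i)]
    _ = - ∫ x, DDfun Q m x * ϕ x := by
        congr 1
        refine integral_congr_ae (Eventually.of_forall fun x => ?_)
        show (∑ i, lineDeriv ℝ (FF m i) x (e i) * ϕ x) = DDfun Q m x * ϕ x
        rw [← Finset.sum_mul, he]
        rw [sum_lineDeriv_FF m x]
        rfl
    _ ≤ - ∫ x, ((((Q:ℝ)-1)/2^(m-1)) * (1+‖x‖)^(-μ) * |vv m x|^(1-χ)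
          * ‖gradient (vv m) x‖^χ /
          Real.sqrt (1 + ‖gradient (vv m) x‖^2)) * ϕ x := by
        apply neg_le_neg
        apply integral_mono_of_nonneg
        · exact Eventually.of_forall fun x =>
            mul_nonneg (psi_nonneg Q m hQ χ μ x) (hpos x)
        · exact ((continuous_DDfun Q m).mul hK.continuous).integrable_of_hasCompactSupport
            hcs.mul_left
        · exact Eventually.of_forall fun x =>
            mul_le_mul_of_nonneg_right
              (pointwise_bound Q m hQ hm χ μ hχ0 hχ1 hmbig x) (hpos x)
end S17

/-- Failure of the a-priori upper bound at the borderline exponent `ω = 1−χ`: there is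
an unbounded global weak solution of the coercive mean curvature inequality with
nonlinearity `f(t) = t^{1−χ}` for large `t`. -/
theorem statement17 (Q : ℕ) (hQ : 2 ≤ Q) (χ μ : ℝ)
    (hχ0 : 0 ≤ χ) (hχ1 : χ < 1) (hμ : μ < 2 - χ) :
    ∃ C : ℝ, 0 < C ∧
    ∃ f : ℝ → ℝ, Continuous f ∧ (∀ t, 0 ≤ f t) ∧
      (∃ T : ℝ, 0 < T ∧ ∀ t ≥ T, f t = t ^ (1 - χ)) ∧
    ∃ v : EuclideanSpace ℝ (Fin Q) → ℝ, LocallyLipschitz v ∧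
      ¬ BddAbove (range v) ∧
      IsWeakSuperMC Q v (fun x =>
        C * (1 + ‖x‖) ^ (-μ) * f (v x) * ‖gradient v x‖ ^ χ /
          Real.sqrt (1 + ‖gradient v x‖ ^ 2)) := by
  have h1χ : 0 < 1 - χ := by linarith
  set d : ℝ := (|μ|+1)/(2*(1-χ)) with hd
  set m : ℕ := ⌈d⌉₊ + 1 with hmdef
  have hm : 1 ≤ m := Nat.le_add_left 1 _
  have hmbig : |μ| + 1 ≤ 2*((m:ℝ)-1)*(1-χ) := by
    have h2 : d ≤ (⌈d⌉₊ : ℝ) := Nat.le_ceil d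
    have h3 : ((m:ℝ)-1) = (⌈d⌉₊:ℝ) := by rw [hmdef]; push_cast; ring
    rw [h3]
    have h4 : 0 < 2*(1-χ) := by linarith
    calc |μ|+1 = d * (2*(1-χ)) := by rw [hd]; field_simp
      _ ≤ (⌈d⌉₊:ℝ) * (2*(1-χ)) := mul_le_mul_of_nonneg_right h2 h4.le
      _ = 2*((⌈d⌉₊:ℝ))*(1-χ) := by ring
  have hQ2 : (2:ℝ) ≤ (Q:ℝ) := by exact_mod_cast hQ
  refine ⟨((Q:ℝ)-1)/2^(m-1), div_pos (by linarith) (by positivity), ?_⟩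
  refine ⟨fun t => |t| ^ (1-χ), ?_, ?_, ⟨1, one_pos, ?_⟩, ?_⟩
  · exact Continuous.rpow_const continuous_abs (fun x => Or.inr h1χ.le)
  · exact fun t => Real.rpow_nonneg (abs_nonneg t) _
  · intro t ht
    show |t| ^ (1-χ) = t ^ (1-χ)
    rw [abs_of_nonneg (by linarith)]
  refine ⟨S17.vv m, ((S17.contDiff_vv m).of_le (mod_cast le_top)).locallyLipschitz, ?_, ?_⟩
  · -- unboundedness
    rintro ⟨M, hM⟩
    set i0 : Fin Q := ⟨0, by omega⟩ with hi0
    set t : ℝ := Real.sqrt (max M 0) with htdef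
    set x : EuclideanSpace ℝ (Fin Q) := EuclideanSpace.single i0 t with hxdef
    have hvx : S17.vv m x ≤ M := hM (mem_range_self x)
    have hnorm : ‖x‖ = |t| := by
      rw [hxdef]
      simpa using EuclideanSpace.norm_single i0 t
    have ht2 : ‖x‖^2 = max M 0 := by
      rw [hnorm, sq_abs, htdef, Real.sq_sqrt (le_max_right M 0)]
    have h5 : 1 + ‖x‖^2 ≤ (1+‖x‖^2)^m := by
      apply le_self_pow₀
      · have := sq_nonneg ‖x‖
        linarith
      · omega
    have h6 : (1+‖x‖^2)^m + 1 ≤ S17.vv m x := by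
      have h7 := Real.add_one_le_exp ((1+‖x‖^2)^m)
      unfold S17.vv
      linarith
    have h8 : M ≤ max M 0 := le_max_left M 0
    rw [ht2] at h5 h6
    linarith
  · -- weak solution property
    intro ϕ hlip hcs hpos
    exact S17.weak_solution Q m hQ hm χ μ hχ0 hχ1 hmbig ϕ hlip hcs hpos
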